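/- For every real x with |x| < 1, K(x) = (π/2) · Σ_{k=0}^∞ ((2k choose k)/4^k)² · x^{2k}, where K(x) := ∫_0^{π/2} (1 − x² sin²φ)^{−1/2} dφ is the complete elliptic integral of the first kind. -/

import Mathlib

/-!
Expand the integrand by the binomial series
`(1 - t)^(-1/2) = ∑ₖ (centralBinom k / 4^k) tᵏ` at `t = x² sin² φ` and integrate term by term,
which is legitimate by dominated convergence with the majorant `∑ₖ (centralBinom k / 4^k) x^(2k)`.
Wallis' formula `∫₀^{π/2} sin^(2k) = (π/2) · centralBinom k / 4^k` then produces the second factor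
`centralBinom k / 4^k`.
-/

open Real

/-- The complete elliptic integral of the first kind. -/
noncomputable def ellipticK (x : ℝ) : ℝ :=
  ∫ φ in (0 : ℝ)..(π / 2), 1 / Real.sqrt (1 - x ^ 2 * Real.sin φ ^ 2)

open Finset Polynomial

theorem centralBinom_div_four_pow_succ (k : ℕ) :
    ((k + 1).centralBinom : ℝ) / 4 ^ (k + 1) =
      (2 * k + 1) / (2 * k + 2) * (k.centralBinom / 4 ^ k) := by
  have h : ((k + 1 : ℕ) : ℝ) * (k + 1).centralBinom = 2 * (2 * k + 1) * k.centralBinom := by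
    exact_mod_cast Nat.succ_mul_centralBinom_succ k
  push_cast at h
  field_simp
  linear_combination 2 * 4 ^ k * h

theorem centralBinom_div_four_pow_eq_prod (k : ℕ) :
    (k.centralBinom : ℝ) / 4 ^ k = ∏ i ∈ range k, (2 * (i : ℝ) + 1) / (2 * i + 2) := by
  induction k with
  | zero => simp
  | succ k ih => rw [centralBinom_div_four_pow_succ, ih, prod_range_succ, mul_comm]

theorem ascPochhammer_eval_half (k : ℕ) :
    (ascPochhammer ℝ k).eval (1 / 2) = k.factorial * (k.centralBinom / 4 ^ k) := by
  induction k with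
  | zero => simp
  | succ k ih =>
    rw [ascPochhammer_succ_eval, ih, centralBinom_div_four_pow_succ, Nat.factorial_succ]
    push_cast
    field_simp
    ring

theorem Ring.multichoose_half (k : ℕ) :
    Ring.multichoose (1 / 2 : ℝ) k = k.centralBinom / 4 ^ k := by
  have h := Ring.factorial_nsmul_multichoose_eq_ascPochhammer (1 / 2 : ℝ) k
  rw [ascPochhammer_smeval_eq_eval, ascPochhammer_eval_half, nsmul_eq_mul] at h
  exact mul_left_cancel₀ (by positivity) h

theorem hasSum_centralBinom_div_four_pow_mul_pow {t : ℝ} (ht : |t| < 1) :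
    HasSum (fun k : ℕ => (k.centralBinom : ℝ) / 4 ^ k * t ^ k) (1 / √(1 - t)) := by
  have h := (one_div_one_sub_rpow_hasFPowerSeriesOnBall_zero (1 / 2)).hasSum
    (y := t) (by simpa [enorm_eq_nnnorm, ← NNReal.coe_lt_coe] using ht)
  simp only [FormalMultilinearSeries.ofScalars_apply_eq, zero_add, smul_eq_mul,
    ← Ring.multichoose_eq, Ring.multichoose_half] at h
  rwa [Real.sqrt_eq_rpow]

theorem integral_sin_pow_even_zero_pi_div_two (k : ℕ) :
    ∫ φ in (0 : ℝ)..(π / 2), sin φ ^ (2 * k) = π / 2 * (k.centralBinom / 4 ^ k) := by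
  have hint (a b : ℝ) : IntervalIntegrable (fun φ => sin φ ^ (2 * k)) MeasureTheory.volume a b :=
    (continuous_sin.pow _).intervalIntegrable a b
  have hsymm : ∫ φ in (π / 2)..π, sin φ ^ (2 * k) = ∫ φ in (0 : ℝ)..(π / 2), sin φ ^ (2 * k) := by
    have := intervalIntegral.integral_comp_sub_left (fun φ => sin φ ^ (2 * k)) π (a := 0) (b := π / 2)
    simp only [sin_pi_sub, sub_zero, sub_half] at this
    exact this.symm
  have hfull := intervalIntegral.integral_add_adjacent_intervals (hint 0 (π / 2)) (hint (π / 2) π)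
  rw [hsymm, integral_sin_pow_even, ← centralBinom_div_four_pow_eq_prod] at hfull
  linarith

theorem hasSum_integral_ellipticK {x : ℝ} (hx : |x| < 1) :
    HasSum (fun k : ℕ => ∫ φ in (0 : ℝ)..(π / 2),
      (k.centralBinom : ℝ) / 4 ^ k * (x ^ 2 * sin φ ^ 2) ^ k) (ellipticK x) := by
  have hsq (φ : ℝ) : 0 ≤ x ^ 2 * sin φ ^ 2 ∧ x ^ 2 * sin φ ^ 2 ≤ x ^ 2 :=
    ⟨by positivity, mul_le_of_le_one_right (sq_nonneg x) (sin_sq_le_one φ)⟩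
  have hx2 : |x ^ 2| < 1 := by
    rw [abs_pow, sq_lt_one_iff₀ (abs_nonneg x)]
    exact hx
  refine intervalIntegral.hasSum_integral_of_dominated_convergence
    (fun k _ => (k.centralBinom : ℝ) / 4 ^ k * (x ^ 2) ^ k) (fun k => ?_) (fun k => ?_) ?_
    intervalIntegrable_const ?_
  · exact (by fun_prop : Continuous fun φ =>
      (k.centralBinom : ℝ) / 4 ^ k * (x ^ 2 * sin φ ^ 2) ^ k).aestronglyMeasurable
  · refine Filter.Eventually.of_forall fun φ _ => ?_
    rw [norm_mul, norm_pow, Real.norm_of_nonneg (hsq φ).1, Real.norm_of_nonneg (by positivity)]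
    gcongr
    exact (hsq φ).2
  · exact Filter.Eventually.of_forall fun _ _ =>
      (hasSum_centralBinom_div_four_pow_mul_pow hx2).summable
  · refine Filter.Eventually.of_forall fun φ _ => hasSum_centralBinom_div_four_pow_mul_pow ?_
    rw [abs_of_nonneg (hsq φ).1]
    exact (hsq φ).2.trans_lt (abs_lt.mp hx2).2

theorem ellipticK_eq_series (x : ℝ) (hx : |x| < 1) :
    ellipticK x =
      (π / 2) * ∑' k : ℕ, (((2 * k).choose k : ℝ) / 4 ^ k) ^ 2 * x ^ (2 * k) := by
  have hterm (k : ℕ) : ∫ φ in (0 : ℝ)..(π / 2),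
      (k.centralBinom : ℝ) / 4 ^ k * (x ^ 2 * sin φ ^ 2) ^ k =
        π / 2 * (((2 * k).choose k : ℝ) / 4 ^ k) ^ 2 * x ^ (2 * k) := by
    simp_rw [mul_pow, ← pow_mul, ← mul_assoc]
    rw [intervalIntegral.integral_const_mul, integral_sin_pow_even_zero_pi_div_two,
      Nat.centralBinom_eq_two_mul_choose]
    ring
  rw [← (hasSum_integral_ellipticK hx).tsum_eq, tsum_congr hterm, ← tsum_mul_left]
  exact tsum_congr fun k => by ring
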